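/- The one-dimensional Mehler kernel p_τ(x,y) = (4πτ)^{-1/2} (aτ/2 / sinh(aτ/2))^{1/2} exp(-(a/8)coth(aτ/2)(x²+y²) + (a/4)cosech(aτ/2)xy) satisfies the semigroup property ∫_ℝ p_τ(x,y) p_{τ'}(y,z) dy = p_{τ+τ'}(x,z) for all τ, τ' > 0 and a > 0. -/

import Mathlib

open Real

/-- The one-dimensional Mehler kernel
`p_τ(x,y) = (4πτ)^{-1/2} (aτ/2 / sinh(aτ/2))^{1/2}
  exp(-(a/8) coth(aτ/2)(x²+y²) + (a/4) cosech(aτ/2) xy)`. -/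
noncomputable def mehler1 (a τ x y : ℝ) : ℝ :=
  (4 * π * τ) ^ (-(1 : ℝ) / 2) *
    Real.sqrt ((a * τ / 2) / Real.sinh (a * τ / 2)) *
    Real.exp (-(a / 8) * (Real.cosh (a * τ / 2) / Real.sinh (a * τ / 2)) *
        (x ^ 2 + y ^ 2) +
      (a / 4) * (1 / Real.sinh (a * τ / 2)) * x * y)

/-- Rewrite the Mehler kernel with a simplified normalization constant. -/
lemma mehler1_eq (a τ x y : ℝ) (ha : 0 < a) (hτ : 0 < τ) :
    mehler1 a τ x y =
      Real.sqrt (a / (8 * π * Real.sinh (a * τ / 2))) *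
      Real.exp (-(a / 8) * (Real.cosh (a * τ / 2) / Real.sinh (a * τ / 2)) *
          (x ^ 2 + y ^ 2) +
        (a / 4) * (1 / Real.sinh (a * τ / 2)) * x * y) := by
  have hs : 0 < Real.sinh (a * τ / 2) := Real.sinh_pos_iff.2 (by positivity)
  have h4 : (0:ℝ) < 4 * π * τ := by positivity
  unfold mehler1
  congr 1
  rw [show (-(1:ℝ)/2) = -(1/2) by ring, Real.rpow_neg h4.le, ← Real.sqrt_eq_rpow,
    ← Real.sqrt_inv, ← Real.sqrt_mul (by positivity)]
  congr 1
  field_simp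
  ring

/-- Gaussian integral with a linear term. -/
lemma gauss_aux (B C : ℝ) (hB : 0 < B) :
    (∫ y : ℝ, Real.exp (-B * y ^ 2 + C * y)) =
      Real.sqrt (π / B) * Real.exp (C ^ 2 / (4 * B)) := by
  have h : ∀ y : ℝ, -B * y ^ 2 + C * y =
      -B * (y - C / (2 * B)) ^ 2 + C ^ 2 / (4 * B) := by
    intro y; field_simp; ring
  simp_rw [h, Real.exp_add]
  rw [MeasureTheory.integral_mul_const,
    MeasureTheory.integral_sub_right_eq_self
      (fun y => Real.exp (-B * y ^ 2)) (C / (2 * B)),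
    integral_gaussian]

/-- Core computation for the Mehler semigroup property, with
`s = sinh(aτ/2)`, `c = cosh(aτ/2)`, `s' = sinh(aτ'/2)`, `c' = cosh(aτ'/2)`. -/
lemma mehler_core (a s c s' c' x z : ℝ) (ha : 0 < a) (hs : 0 < s) (hs' : 0 < s')
    (hc : 1 ≤ c) (hc' : 1 ≤ c')
    (h1 : c ^ 2 = s ^ 2 + 1) (h2 : c' ^ 2 = s' ^ 2 + 1) :
    (∫ y : ℝ, (Real.sqrt (a / (8 * π * s)) *
        Real.exp (-(a / 8) * (c / s) * (x ^ 2 + y ^ 2) + a / 4 * (1 / s) * x * y)) *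
      (Real.sqrt (a / (8 * π * s')) *
        Real.exp (-(a / 8) * (c' / s') * (y ^ 2 + z ^ 2) + a / 4 * (1 / s') * y * z))) =
      Real.sqrt (a / (8 * π * (s * c' + c * s'))) *
      Real.exp (-(a / 8) * ((c * c' + s * s') / (s * c' + c * s')) * (x ^ 2 + z ^ 2) +
        a / 4 * (1 / (s * c' + c * s')) * x * z) := by
  have hcp : (0:ℝ) < c := lt_of_lt_of_le one_pos hc
  have hcp' : (0:ℝ) < c' := lt_of_lt_of_le one_pos hc'
  have hS : (0:ℝ) < s * c' + c * s' := by positivity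
  have hBpos : (0:ℝ) < a * (s * c' + c * s') / (8 * s * s') := by positivity
  have key : ∀ y : ℝ,
      (Real.sqrt (a / (8 * π * s)) *
        Real.exp (-(a / 8) * (c / s) * (x ^ 2 + y ^ 2) + a / 4 * (1 / s) * x * y)) *
      (Real.sqrt (a / (8 * π * s')) *
        Real.exp (-(a / 8) * (c' / s') * (y ^ 2 + z ^ 2) + a / 4 * (1 / s') * y * z)) =
      (Real.sqrt (a / (8 * π * s)) * Real.sqrt (a / (8 * π * s')) *
          Real.exp (-(a / 8) * (c / s) * x ^ 2 + -(a / 8) * (c' / s') * z ^ 2)) *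
        Real.exp (-(a * (s * c' + c * s') / (8 * s * s')) * y ^ 2 +
          (a / 4 * (x / s + z / s')) * y) := by
    intro y
    rw [mul_mul_mul_comm, ← Real.exp_add,
      show (-(a / 8) * (c / s) * (x ^ 2 + y ^ 2) + a / 4 * (1 / s) * x * y) +
          (-(a / 8) * (c' / s') * (y ^ 2 + z ^ 2) + a / 4 * (1 / s') * y * z) =
        (-(a / 8) * (c / s) * x ^ 2 + -(a / 8) * (c' / s') * z ^ 2) +
          (-(a * (s * c' + c * s') / (8 * s * s')) * y ^ 2 +
            (a / 4 * (x / s + z / s')) * y) from by field_simp; ring,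
      Real.exp_add, ← mul_assoc]
  simp_rw [key]
  rw [MeasureTheory.integral_const_mul, gauss_aux _ _ hBpos]
  rw [show ∀ (p q eD P eQ : ℝ), p * q * Real.exp eD * (P * Real.exp eQ) =
      p * q * P * Real.exp (eD + eQ) from by intros; rw [Real.exp_add]; ring]
  congr 1
  · rw [← Real.sqrt_mul (by positivity), ← Real.sqrt_mul (by positivity)]
    congr 1
    field_simp
  · congr 1
    have poly : -(c*s'*(s*c'+c*s'))*x^2 - (c'*s*(s*c'+c*s'))*z^2 + (x*s'+z*s)^2 =
        -((c*c'+s*s')*(s*s'))*(x^2+z^2) + 2*(s*s')*x*z := by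
      linear_combination (-(s'^2*x^2))*h1 + (-(s^2*z^2))*h2
    have e1 : -(a/8)*(c/s)*x^2 + -(a/8)*(c'/s')*z^2 +
        (a/4*(x/s+z/s'))^2/(4*(a*(s*c'+c*s')/(8*s*s'))) =
        a * (-(c*s'*(s*c'+c*s'))*x^2 - (c'*s*(s*c'+c*s'))*z^2 + (x*s'+z*s)^2) /
          (8*(s*s'*(s*c'+c*s'))) := by
      field_simp
      ring
    have e2 : -(a/8)*((c*c'+s*s')/(s*c'+c*s'))*(x^2+z^2) + a/4*(1/(s*c'+c*s'))*x*z =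
        a * (-((c*c'+s*s')*(s*s'))*(x^2+z^2) + 2*(s*s')*x*z) / (8*(s*s'*(s*c'+c*s'))) := by
      field_simp
      ring
    rw [e1, e2, poly]

/-- the one-dimensional Mehler kernel satisfies the semigroup
property `∫_ℝ p_τ(x,y) p_{τ'}(y,z) dy = p_{τ+τ'}(x,z)` for all `τ, τ' > 0`
and `a > 0`. -/
theorem stmt17 (a τ τ' : ℝ) (ha : 0 < a) (hτ : 0 < τ) (hτ' : 0 < τ') :
    ∀ x z : ℝ, (∫ y : ℝ, mehler1 a τ x y * mehler1 a τ' y z) =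
      mehler1 a (τ + τ') x z := by
  intro x z
  have hs : 0 < Real.sinh (a * τ / 2) := Real.sinh_pos_iff.2 (by positivity)
  have hs' : 0 < Real.sinh (a * τ' / 2) := Real.sinh_pos_iff.2 (by positivity)
  have h1 : Real.cosh (a * τ / 2) ^ 2 = Real.sinh (a * τ / 2) ^ 2 + 1 := by
    have := Real.cosh_sq_sub_sinh_sq (a * τ / 2); linarith
  have h2 : Real.cosh (a * τ' / 2) ^ 2 = Real.sinh (a * τ' / 2) ^ 2 + 1 := by
    have := Real.cosh_sq_sub_sinh_sq (a * τ' / 2); linarith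
  rw [mehler1_eq a (τ + τ') x z ha (by positivity)]
  simp_rw [fun y => mehler1_eq a τ x y ha hτ, fun y => mehler1_eq a τ' y z ha hτ']
  rw [show a * (τ + τ') / 2 = a * τ / 2 + a * τ' / 2 by ring,
    Real.sinh_add, Real.cosh_add]
  exact mehler_core a (Real.sinh (a * τ / 2)) (Real.cosh (a * τ / 2))
    (Real.sinh (a * τ' / 2)) (Real.cosh (a * τ' / 2)) x z ha hs hs'
    (Real.one_le_cosh _) (Real.one_le_cosh _) h1 h2
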